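/- Let E be an n-perfect pseudo-effect algebra with n-decomposition (E₀,...,Eₙ). Then (E₀; +, 0) is a cancellative positively ordered monoid that is the positive cone of a unique (up to isomorphism) directed partially ordered group G, i.e., there exists a directed po-group G with G⁺ = E₀. -/

import Mathlib

/-!
Since all sums `E₀ + E₀` exist, the ideal `E₀` is a monoid under the partial addition. It is
cancellative and has no nonzero invertible elements, and (PE3) together with the downward
closure of `E₀` gives `a + E₀ = E₀ + a` for every `a ∈ E₀`. This makes `E₀` an Ore set in
itself, so its Ore localization is a group `G` of differences `-s + r` into which `E₀` embeds.
In `G` the image of `E₀` is invariant under conjugation and meets its negative only in `0`, so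
`x ≤ y ↔ -x + y ∈ E₀` is a partial order invariant under both translations; it is directed
since `-s + r ≤ r`. For another such group `G'`, the universal property of the localization
gives a homomorphism `G → G'`, injective by cancellation, surjective because `G'` is directed
and hence generated by its positive cone, and an order isomorphism because it maps the cone of
`G` onto that of `G'`.
-/

/-- A pseudo-effect algebra (PEA): a structure with a partial addition `add`
(with domain of definition `D`), a zero and a one, satisfying (PE1)-(PE4)
together with the (derivable) neutrality of zero. -/
structure PEA (E : Type) where
  /-- `D a b` means that the partial sum `a + b` is defined. -/
  D : E → E → Prop
  /-- The partial addition (its value is relevant only when `D a b` holds). -/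
  add : E → E → E
  zero : E
  one : E
  /-- (PE1), definedness part. -/
  assoc_defined : ∀ a b c, (D a b ∧ D (add a b) c) ↔ (D b c ∧ D a (add b c))
  /-- (PE1), equality part. -/
  assoc_eq : ∀ a b c, D a b → D (add a b) c → add (add a b) c = add a (add b c)
  /-- (PE2), right complement. -/
  compl_right : ∀ a, ∃! d, D a d ∧ add a d = one
  /-- (PE2), left complement. -/
  compl_left : ∀ a, ∃! e, D e a ∧ add e a = one
  /-- (PE3). -/
  pe3 : ∀ a b, D a b →
    (∃ d, D d a ∧ add d a = add a b) ∧ (∃ e, D b e ∧ add b e = add a b)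
  /-- (PE4). -/
  pe4_right : ∀ a, D a one → a = zero
  pe4_left : ∀ a, D one a → a = zero
  D_zero_right : ∀ a, D a zero
  D_zero_left : ∀ a, D zero a
  add_zero : ∀ a, add a zero = a
  zero_add : ∀ a, add zero a = a

namespace PEA

variable {E : Type} (P : PEA E)

/-- The induced partial order: `a ≤ b` iff `a + c = b` for some `c`. -/
def le (a b : E) : Prop := ∃ c, P.D a c ∧ P.add a c = b

/-- The left complement `a⁻`, the unique element with `a⁻ + a = 1`. -/
noncomputable def lneg (a : E) : E := (P.compl_left a).choose

/-- The right complement `a~`, the unique element with `a + a~ = 1`. -/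
noncomputable def rneg (a : E) : E := (P.compl_right a).choose

/-- `E` is weakly commutative if `a + b` is defined iff `b + a` is defined. -/
def WeaklyCommutative : Prop := ∀ a b, P.D a b ↔ P.D b a

/-- `E` is symmetric if the two complements coincide. -/
def Symmetric : Prop := ∀ a, P.lneg a = P.rneg a

/-- A state on a PEA: a `[0,1]`-valued map, additive on existing sums, sending
`0 ↦ 0` and `1 ↦ 1`. -/
def IsState (s : E → ℝ) : Prop :=
  s P.zero = 0 ∧ s P.one = 1 ∧ (∀ a, 0 ≤ s a ∧ s a ≤ 1) ∧
    ∀ a b, P.D a b → s (P.add a b) = s a + s b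

/-- An `(n+1)`-valued discrete state: a state whose range is `{0, 1/n, …, 1}`. -/
def IsDiscreteState (n : ℕ) (s : E → ℝ) : Prop :=
  P.IsState s ∧ Set.range s = {x : ℝ | ∃ i ≤ n, x = (i : ℝ) / n}

/-- An ideal: a nonempty downward closed subset closed under existing sums. -/
def IsIdeal (I : Set E) : Prop :=
  I.Nonempty ∧ (∀ a i, i ∈ I → P.le a i → a ∈ I) ∧
    ∀ i j, i ∈ I → j ∈ I → P.D i j → P.add i j ∈ I

/-- A normal ideal: `a + i = j + a` implies `i ∈ I ↔ j ∈ I`. -/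
def IsNormalIdeal (I : Set E) : Prop :=
  P.IsIdeal I ∧ ∀ a i j, P.D a i → P.D j a → P.add a i = P.add j a → (i ∈ I ↔ j ∈ I)

/-- A maximal ideal: proper and not properly contained in a proper ideal. -/
def IsMaximalIdeal (I : Set E) : Prop :=
  P.IsIdeal I ∧ P.one ∉ I ∧ ∀ J, P.IsIdeal J → P.one ∉ J → I ⊆ J → I = J

/-- `n`-fold partial multiple of an element. -/
def nmul : ℕ → E → E
  | 0, _ => P.zero
  | k + 1, a => P.add (nmul k a) a

/-- Definedness of the `n`-fold partial multiple. -/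
def nmulD : ℕ → E → Prop
  | 0, _ => True
  | k + 1, a => nmulD k a ∧ P.D (P.nmul k a) a

/-- The set of elements of infinite isotropic index. -/
def Infinit : Set E := {a | ∀ k, P.nmulD k a}

/-- An `n`-decomposition of a PEA. -/
def IsNDecomp (n : ℕ) (F : ℕ → Set E) : Prop :=
  (∀ i, i ≤ n → (F i).Nonempty) ∧
  (∀ i j, i ≤ n → j ≤ n → i ≠ j → F i ∩ F j = ∅) ∧
  ((⋃ i ∈ Set.Iic n, F i) = Set.univ) ∧
  (∀ i, i ≤ n → P.lneg '' F i = F (n - i) ∧ P.rneg '' F i = F (n - i)) ∧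
  (∀ i j, i ≤ n → j ≤ n → ∀ x ∈ F i, ∀ y ∈ F j, P.D x y →
     i + j ≤ n ∧ P.add x y ∈ F (i + j))

/-- An `n`-perfect PEA: an `n`-decomposition with all sums `Eᵢ + Eⱼ`, `i+j < n`,
existing, and whose bottom slice is the unique maximal ideal. -/
def IsNPerfect (n : ℕ) (F : ℕ → Set E) : Prop :=
  P.IsNDecomp n F ∧
  (∀ i j, i + j < n → ∀ x ∈ F i, ∀ y ∈ F j, P.D x y) ∧
  (P.IsMaximalIdeal (F 0) ∧ ∀ J, P.IsMaximalIdeal J → J = F 0)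

end PEA

open AddOreLocalization

/-- `a + M = M + a` for every `a`. -/
class IsNormalAddMonoid (M : Type*) [AddMonoid M] : Prop where
  exists_add_eq_add_left : ∀ a b : M, ∃ c, c + a = a + b
  exists_add_eq_add_right : ∀ a b : M, ∃ c, a + c = b + a

open IsNormalAddMonoid

section

variable (M : Type*) [AddCancelMonoid M] [IsNormalAddMonoid M]

noncomputable instance IsNormalAddMonoid.addOreSet : AddOreSet (⊤ : AddSubmonoid M) where
  ore_right_cancel _ _ _ h := ⟨0, by rw [add_right_cancel h]⟩
  oreMin r _ := r
  oreSubtra r s := ⟨(exists_add_eq_add_left r s.1).choose, trivial⟩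
  ore_eq r s := (exists_add_eq_add_left r s.1).choose_spec

abbrev DifferenceGroup := AddOreLocalization (⊤ : AddSubmonoid M) M

end

namespace DifferenceGroup

variable {M : Type*} [AddCancelMonoid M] [IsNormalAddMonoid M]

noncomputable abbrev of : M →+ DifferenceGroup M := numeratorHom

theorem of_injective : Function.Injective (of : M →+ DifferenceGroup M) := by
  intro r r' h
  rw [numeratorHom_apply, numeratorHom_apply, oreSub_eq_iff] at h
  obtain ⟨u, v, h1, h2⟩ := h
  simp only [AddSubmonoid.coe_zero, add_zero, AddSubmonoid.vadd_def, vadd_eq_add] at h1 h2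
  rw [← h2] at h1
  exact (add_left_cancel h1).symm

theorem isAddUnit (g : DifferenceGroup M) : IsAddUnit g := by
  induction g using AddOreLocalization.ind with
  | _ r s =>
    let r' : (⊤ : AddSubmonoid M) := ⟨r, AddSubmonoid.mem_top r⟩
    exact ⟨⟨r -ₒ s, s.1 -ₒ r', AddOreLocalization.add_neg r' s,
      AddOreLocalization.add_neg s r'⟩, rfl⟩

noncomputable instance : Neg (DifferenceGroup M) := ⟨fun g ↦ ↑(-(isAddUnit g).addUnit)⟩

noncomputable instance : AddGroup (DifferenceGroup M) where
  zsmul := zsmulRec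
  neg_add_cancel g := by
    conv_lhs => rhs; rw [← (isAddUnit g).addUnit_spec]
    exact AddUnits.neg_add _

theorem exists_eq_neg_add (g : DifferenceGroup M) : ∃ r s : M, g = -of s + of r := by
  induction g using AddOreLocalization.ind with
  | _ r s =>
    refine ⟨r, s, eq_neg_add_iff_add_eq.mpr ?_⟩
    exact AddOreLocalization.add_cancel

theorem exists_conj_eq_of (g : DifferenceGroup M) (m : M) :
    ∃ m' : M, g + of m + -g = of m' := by
  obtain ⟨r, s, rfl⟩ := exists_eq_neg_add g
  obtain ⟨d, hd⟩ := exists_add_eq_add_left r m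
  obtain ⟨e, he⟩ := exists_add_eq_add_right s d
  refine ⟨e, ?_⟩
  calc -of s + of r + of m + -(-of s + of r)
      = -of s + (of (r + m) + -of r) + of s := by
        simp only [map_add, neg_add_rev, neg_neg, add_assoc]
    _ = -of s + of (s + e) := by simp only [← hd, he, map_add, add_neg_cancel_left, add_assoc]
    _ = of e := by rw [map_add, neg_add_cancel_left]

variable {G : Type*} [AddGroup G] (f : M →+ G)

noncomputable def lift : DifferenceGroup M →+ G :=
  universalAddHom f ((toAddUnits : G ≃+ AddUnits G).toAddMonoidHom.comp
    (f.comp (AddSubmonoid.subtype ⊤))) fun _ ↦ rfl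

@[simp]
theorem lift_of (m : M) : lift f (of m) = f m := universalAddHom_commutes _ _ _

variable {f}

theorem lift_injective (hf : Function.Injective f) : Function.Injective (lift f) := by
  refine (injective_iff_map_eq_zero _).mpr fun g hg ↦ ?_
  obtain ⟨r, s, rfl⟩ := exists_eq_neg_add g
  rw [map_add, map_neg, lift_of, lift_of, neg_add_eq_zero, hf.eq_iff] at hg
  rw [hg, neg_add_cancel]

theorem lift_surjective [PartialOrder G] [AddLeftMono G] [IsDirectedOrder G]
    (hrange : {g : G | 0 ≤ g} ⊆ Set.range f) : Function.Surjective (lift f) := by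
  intro g
  obtain ⟨c, hc, hgc⟩ := exists_ge_ge 0 g
  obtain ⟨a, ha⟩ := hrange hc
  obtain ⟨b, hb⟩ := hrange (le_neg_add_iff_le.mpr hgc)
  exact ⟨of a + -of b, by rw [map_add, map_neg, lift_of, lift_of, ha, hb, neg_add_rev,
    neg_neg, add_neg_cancel_left]⟩

variable [Subsingleton (AddUnits M)]

noncomputable instance : PartialOrder (DifferenceGroup M) where
  le g h := ∃ m : M, -g + h = of m
  le_refl g := ⟨0, by rw [neg_add_cancel, map_zero]⟩
  le_trans g h k := fun ⟨m, hm⟩ ⟨m', hm'⟩ ↦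
    ⟨m + m', by rw [map_add, ← hm, ← hm', add_assoc, add_neg_cancel_left]⟩
  le_antisymm g h := fun ⟨m, hm⟩ ⟨m', hm'⟩ ↦ by
    have hmm' : m + m' = 0 := of_injective <| by
      rw [map_add, map_zero, ← hm, ← hm', add_assoc, add_neg_cancel_left, neg_add_cancel]
    rw [eq_zero_of_add_right' hmm', map_zero] at hm
    exact neg_add_eq_zero.mp hm

theorem le_iff_exists {g h : DifferenceGroup M} : g ≤ h ↔ ∃ m : M, -g + h = of m := Iff.rfl

theorem nonneg_iff {g : DifferenceGroup M} : 0 ≤ g ↔ g ∈ Set.range of := by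
  simp only [le_iff_exists, neg_zero, zero_add, Set.mem_range, eq_comm]

theorem of_le_of_iff {a b : M} : of a ≤ of b ↔ ∃ c, a + c = b := by
  refine exists_congr fun c ↦ ?_
  rw [neg_add_eq_iff_eq_add, ← map_add, of_injective.eq_iff, eq_comm]

instance : AddLeftMono (DifferenceGroup M) where
  elim c g h := fun ⟨m, hm⟩ ↦ ⟨m, by rwa [neg_add_rev, add_assoc, neg_add_cancel_left]⟩

instance : AddRightMono (DifferenceGroup M) where
  elim c g h := fun ⟨m, hm⟩ ↦ by
    obtain ⟨m', hm'⟩ := exists_conj_eq_of (-c) m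
    refine ⟨m', show -(g + c) + (h + c) = of m' from ?_⟩
    rw [← hm', ← hm, neg_neg, neg_add_rev, add_assoc, add_assoc, add_assoc]

theorem exists_le_of (g : DifferenceGroup M) : ∃ r : M, g ≤ of r := by
  obtain ⟨r, s, rfl⟩ := exists_eq_neg_add g
  obtain ⟨m, hm⟩ := exists_conj_eq_of (-of r) s
  exact ⟨r, m, by rw [← hm, neg_add_rev, neg_neg, neg_neg, add_assoc]⟩

instance : IsDirectedOrder (DifferenceGroup M) where
  directed g h := by
    obtain ⟨r, hr⟩ := exists_le_of g
    obtain ⟨r', hr'⟩ := exists_le_of h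
    obtain ⟨c, hc⟩ := exists_add_eq_add_right r' r
    exact ⟨of (r + r'), hr.trans (of_le_of_iff.mpr ⟨r', rfl⟩),
      hr'.trans (of_le_of_iff.mpr ⟨c, hc⟩)⟩

variable [PartialOrder G] [AddLeftMono G]

theorem lift_le_lift_iff (hf : Function.Injective f) (hrange : Set.range f = {g : G | 0 ≤ g})
    {x y : DifferenceGroup M} : lift f x ≤ lift f y ↔ x ≤ y := by
  rw [← le_neg_add_iff_le, ← map_neg, ← map_add, le_iff_exists]
  change lift f (-x + y) ∈ {g : G | 0 ≤ g} ↔ _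
  rw [← hrange]
  constructor
  · rintro ⟨m, hm⟩
    exact ⟨m, lift_injective hf (by rw [lift_of, hm])⟩
  · rintro ⟨m, hm⟩
    exact ⟨m, by rw [hm, lift_of]⟩

theorem exists_addEquiv [IsDirectedOrder G] (hf : Function.Injective f)
    (hrange : Set.range f = {g : G | 0 ≤ g}) :
    ∃ ψ : DifferenceGroup M ≃+ G, (∀ x y, x ≤ y ↔ ψ x ≤ ψ y) ∧
      ∀ m, ψ (of m) = f m :=
  ⟨AddEquiv.ofBijective (lift f) ⟨lift_injective hf, lift_surjective hrange.superset⟩,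
    fun _ _ ↦ (lift_le_lift_iff hf hrange).symm, lift_of f⟩

end DifferenceGroup

namespace PEA

variable {E : Type} (P : PEA E)

theorem lneg_spec (a : E) : P.D (P.lneg a) a ∧ P.add (P.lneg a) a = P.one :=
  (P.compl_left a).choose_spec.1

theorem eq_lneg {a e : E} (h : P.D e a) (he : P.add e a = P.one) : e = P.lneg a :=
  (P.compl_left a).choose_spec.2 e ⟨h, he⟩

theorem rneg_spec (a : E) : P.D a (P.rneg a) ∧ P.add a (P.rneg a) = P.one :=
  (P.compl_right a).choose_spec.1

theorem eq_rneg {a d : E} (h : P.D a d) (hd : P.add a d = P.one) : d = P.rneg a :=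
  (P.compl_right a).choose_spec.2 d ⟨h, hd⟩

-- Both `b` and `c` are the right complement of `(a + b)⁻ + a`.
theorem add_left_cancel {a b c : E} (hb : P.D a b) (hc : P.D a c)
    (h : P.add a b = P.add a c) : b = c := by
  set x := P.lneg (P.add a b)
  obtain ⟨hxD, hx⟩ := P.lneg_spec (P.add a b)
  have hxb := (P.assoc_defined x a b).mpr ⟨hb, hxD⟩
  have hxc := (P.assoc_defined x a c).mpr ⟨hc, h ▸ hxD⟩
  rw [P.eq_rneg hxb.2 (by rw [P.assoc_eq _ _ _ hxb.1 hxb.2, hx]),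
    P.eq_rneg hxc.2 (by rw [P.assoc_eq _ _ _ hxc.1 hxc.2, ← h, hx])]

theorem add_right_cancel {a b c : E} (hb : P.D b a) (hc : P.D c a)
    (h : P.add b a = P.add c a) : b = c := by
  set x := P.rneg (P.add b a)
  obtain ⟨hxD, hx⟩ := P.rneg_spec (P.add b a)
  have hbx := (P.assoc_defined b a x).mp ⟨hb, hxD⟩
  have hcx := (P.assoc_defined c a x).mp ⟨hc, h ▸ hxD⟩
  rw [P.eq_lneg hbx.2 (by rw [← P.assoc_eq _ _ _ hb hxD, hx]),
    P.eq_lneg hcx.2 (by rw [← P.assoc_eq _ _ _ hc (h ▸ hxD), ← h, hx])]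

theorem eq_zero_of_add_right {a b : E} (h : P.D a b) (h0 : P.add a b = P.zero) :
    a = P.zero := by
  have hb : b = P.zero :=
    P.pe4_right b ((P.assoc_defined a b P.one).mp ⟨h, h0 ▸ P.D_zero_left P.one⟩).1
  have ha := P.add_zero a
  rwa [← hb, h0, eq_comm] at ha

theorem le_add_self {a b : E} (h : P.D a b) : P.le b (P.add a b) :=
  (P.pe3 a b h).2

structure TotalIdeal where
  carrier : Set E
  isIdeal : P.IsIdeal carrier
  D_of_mem : ∀ {a b}, a ∈ carrier → b ∈ carrier → P.D a b

namespace TotalIdeal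

variable {P} (I : P.TotalIdeal)

instance : CoeSort P.TotalIdeal Type := ⟨fun I ↦ I.carrier⟩

theorem mem_of_le {a b : E} (hb : b ∈ I.carrier) (h : P.le a b) : a ∈ I.carrier :=
  I.isIdeal.2.1 a b hb h

theorem zero_mem : P.zero ∈ I.carrier := by
  obtain ⟨x, hx⟩ := I.isIdeal.1
  exact I.mem_of_le hx ⟨x, P.D_zero_left x, P.zero_add x⟩

theorem add_mem {a b : E} (ha : a ∈ I.carrier) (hb : b ∈ I.carrier) :
    P.add a b ∈ I.carrier :=
  I.isIdeal.2.2 a b ha hb (I.D_of_mem ha hb)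

instance : Add I := ⟨fun a b ↦ ⟨P.add a b, I.add_mem a.2 b.2⟩⟩

instance : Zero I := ⟨⟨P.zero, I.zero_mem⟩⟩

instance : AddCancelMonoid I where
  add_assoc a b c := Subtype.ext <|
    P.assoc_eq a b c (I.D_of_mem a.2 b.2) (I.D_of_mem (I.add_mem a.2 b.2) c.2)
  zero_add a := Subtype.ext (P.zero_add a)
  add_zero a := Subtype.ext (P.add_zero a)
  nsmul := nsmulRec
  add_left_cancel a b c h := Subtype.ext <|
    P.add_left_cancel (I.D_of_mem a.2 b.2) (I.D_of_mem a.2 c.2) (congrArg Subtype.val h)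
  add_right_cancel a b c h := Subtype.ext <|
    P.add_right_cancel (I.D_of_mem b.2 a.2) (I.D_of_mem c.2 a.2) (congrArg Subtype.val h)

instance : Subsingleton (AddUnits I) :=
  Subsingleton.addUnits_of_isAddUnit fun _ ⟨u, hu⟩ ↦ hu ▸ Subtype.ext
    (P.eq_zero_of_add_right (I.D_of_mem u.val.2 u.neg.2) (congrArg Subtype.val u.val_neg))

instance : IsNormalAddMonoid I where
  exists_add_eq_add_left a b := by
    obtain ⟨d, hd, hda⟩ := (P.pe3 a b (I.D_of_mem a.2 b.2)).1
    exact ⟨⟨d, I.mem_of_le (I.add_mem a.2 b.2) ⟨a, hd, hda⟩⟩, Subtype.ext hda⟩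
  exists_add_eq_add_right a b := by
    obtain ⟨e, he, hae⟩ := (P.pe3 b a (I.D_of_mem b.2 a.2)).2
    exact ⟨⟨e, I.mem_of_le (I.add_mem b.2 a.2) (hae ▸ P.le_add_self he)⟩, Subtype.ext hae⟩

theorem le_iff_exists_add {a b : I} : P.le a b ↔ ∃ c : I, a + c = b := by
  constructor
  · rintro ⟨c, hc, hac⟩
    exact ⟨⟨c, I.mem_of_le b.2 (hac ▸ P.le_add_self hc)⟩, Subtype.ext hac⟩
  · rintro ⟨c, rfl⟩
    exact ⟨c, I.D_of_mem a.2 c.2, rfl⟩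

open DifferenceGroup

open Classical in
noncomputable def toDifferenceGroup (x : E) : DifferenceGroup I :=
  if h : x ∈ I.carrier then of ⟨x, h⟩ else 0

theorem toDifferenceGroup_of_mem {x : E} (h : x ∈ I.carrier) :
    I.toDifferenceGroup x = of ⟨x, h⟩ :=
  dif_pos h

theorem injOn_toDifferenceGroup : Set.InjOn I.toDifferenceGroup I.carrier := fun a ha b hb h ↦ by
  rw [I.toDifferenceGroup_of_mem ha, I.toDifferenceGroup_of_mem hb] at h
  exact congrArg Subtype.val (of_injective h)

theorem image_toDifferenceGroup : I.toDifferenceGroup '' I.carrier = {g | 0 ≤ g} := by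
  have h : (fun a : I ↦ I.toDifferenceGroup a) = of :=
    funext fun a ↦ I.toDifferenceGroup_of_mem a.2
  ext g
  rw [Set.image_eq_range, h]
  exact nonneg_iff.symm

theorem toDifferenceGroup_zero : I.toDifferenceGroup P.zero = 0 := by
  rw [I.toDifferenceGroup_of_mem I.zero_mem]
  exact map_zero of

theorem toDifferenceGroup_add {a b : E} (ha : a ∈ I.carrier) (hb : b ∈ I.carrier) :
    I.toDifferenceGroup (P.add a b) = I.toDifferenceGroup a + I.toDifferenceGroup b := by
  rw [I.toDifferenceGroup_of_mem ha, I.toDifferenceGroup_of_mem hb,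
    I.toDifferenceGroup_of_mem (I.add_mem ha hb), ← map_add]
  rfl

theorem le_iff_toDifferenceGroup_le {a b : E} (ha : a ∈ I.carrier) (hb : b ∈ I.carrier) :
    P.le a b ↔ I.toDifferenceGroup a ≤ I.toDifferenceGroup b := by
  rw [I.toDifferenceGroup_of_mem ha, I.toDifferenceGroup_of_mem hb, of_le_of_iff]
  exact I.le_iff_exists_add (a := ⟨a, ha⟩) (b := ⟨b, hb⟩)

theorem exists_addEquiv_differenceGroup {G : Type*} [AddGroup G] [PartialOrder G]
    [AddLeftMono G] [IsDirectedOrder G] {φ : E → G} (hinj : Set.InjOn φ I.carrier)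
    (himg : φ '' I.carrier = {g | 0 ≤ g})
    (hadd : ∀ a b, a ∈ I.carrier → b ∈ I.carrier → φ (P.add a b) = φ a + φ b) :
    ∃ ψ : DifferenceGroup I ≃+ G, (∀ x y, x ≤ y ↔ ψ x ≤ ψ y) ∧
      ∀ a ∈ I.carrier, ψ (I.toDifferenceGroup a) = φ a := by
  let f : I →+ G := AddMonoidHom.mk' (fun a ↦ φ a) fun a b ↦ hadd a b a.2 b.2
  obtain ⟨ψ, hψ, hψf⟩ := DifferenceGroup.exists_addEquiv (f := f)
    (fun a b h ↦ Subtype.ext (hinj a.2 b.2 h)) (by rw [← himg, Set.image_eq_range]; rfl)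
  exact ⟨ψ, hψ, fun a ha ↦ by rw [I.toDifferenceGroup_of_mem ha, hψf]; rfl⟩

end TotalIdeal

variable {P} in
def IsNPerfect.toTotalIdeal {n : ℕ} {F : ℕ → Set E} (hF : P.IsNPerfect n F) (hn : 1 ≤ n) :
    P.TotalIdeal :=
  ⟨F 0, hF.2.2.1.1, fun ha hb ↦ hF.2.1 0 0 hn _ ha _ hb⟩

end PEA

/-- in an `n`-perfect PEA, `(E₀; +, 0)` is the positive cone of a
directed po-group `G`, unique up to isomorphism. -/
theorem stmt14 {E : Type} (P : PEA E) (n : ℕ) (hn : 1 ≤ n) (F : ℕ → Set E)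
    (hF : P.IsNPerfect n F) :
    ∃ (G : Type) (_ : AddGroup G) (_ : PartialOrder G)
      (_ : CovariantClass G G (· + ·) (· ≤ ·))
      (_ : CovariantClass G G (Function.swap (· + ·)) (· ≤ ·))
      (φ : E → G),
      (∀ a b : G, ∃ c : G, a ≤ c ∧ b ≤ c) ∧
      Set.InjOn φ (F 0) ∧ φ '' F 0 = {g : G | 0 ≤ g} ∧ φ P.zero = 0 ∧
      (∀ a b, a ∈ F 0 → b ∈ F 0 → φ (P.add a b) = φ a + φ b) ∧
      (∀ a b, a ∈ F 0 → b ∈ F 0 → (P.le a b ↔ φ a ≤ φ b)) ∧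
      ∀ (G' : Type) (_ : AddGroup G') (_ : PartialOrder G')
        (_ : CovariantClass G' G' (· + ·) (· ≤ ·))
        (_ : CovariantClass G' G' (Function.swap (· + ·)) (· ≤ ·))
        (φ' : E → G'),
        (∀ a b : G', ∃ c : G', a ≤ c ∧ b ≤ c) →
        Set.InjOn φ' (F 0) → φ' '' F 0 = {g : G' | 0 ≤ g} → φ' P.zero = 0 →
        (∀ a b, a ∈ F 0 → b ∈ F 0 → φ' (P.add a b) = φ' a + φ' b) →
        (∀ a b, a ∈ F 0 → b ∈ F 0 → (P.le a b ↔ φ' a ≤ φ' b)) →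
        ∃ ψ : G ≃+ G', (∀ x y : G, x ≤ y ↔ ψ x ≤ ψ y) ∧
          ∀ a ∈ F 0, ψ (φ a) = φ' a := by
  let I := hF.toTotalIdeal hn
  refine ⟨DifferenceGroup I, inferInstance, inferInstance, inferInstance, inferInstance,
    I.toDifferenceGroup, exists_ge_ge, I.injOn_toDifferenceGroup, I.image_toDifferenceGroup,
    I.toDifferenceGroup_zero, fun _ _ ↦ I.toDifferenceGroup_add,
    fun _ _ ↦ I.le_iff_toDifferenceGroup_le, ?_⟩
  intro G' _ _ _ _ φ' hdir hinj himg _ hadd _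
  have : IsDirectedOrder G' := ⟨hdir⟩
  exact I.exists_addEquiv_differenceGroup hinj himg hadd
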